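/- Let λ and μ be partitions of n of length at most k with the same e-core. Then |λ⁺| = |μ⁺|. -/

import Mathlib

/-! With `k` beads, a partition is recorded by its beta-numbers `β_i = λ_i + (k - 1 - i)`, and
removing an `e`-ribbon replaces one beta-number `β` by `β - e`. The runner-insertion map `ι`
satisfies `ι (p + e) = ι p + (e + 1)`, so each removal lowers `∑ β` by `e` and `∑ ι β` by
`e + 1`. As `λ` and `μ` have the same size and core, both are the same number `w` of
removals above the core `κ`, and `|λ⁺| + k(k-1)/2 = ∑ ι β(λ) = ∑ ι β(κ) + w (e + 1)`
is the same for `μ`. -/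

open Finset

/-- A partition: a weakly decreasing, eventually-zero sequence of naturals.
`parts i` is the `(i+1)`-st part (0-indexed). -/
structure AbacusPartition where
  parts : ℕ → ℕ
  antitone : ∀ ⦃i j : ℕ⦄, i ≤ j → parts j ≤ parts i
  eventually_zero : ∃ N, ∀ i, N ≤ i → parts i = 0

namespace AbacusPartition

/-- The length of a partition: the number of nonzero parts. -/
noncomputable def length (l : AbacusPartition) : ℕ :=
  sInf {N | ∀ i, N ≤ i → l.parts i = 0}

/-- The size `|λ|` of a partition: the sum of its parts. -/
noncomputable def size (l : AbacusPartition) : ℕ :=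
  ∑ i ∈ Finset.range l.length, l.parts i

/-- The beta-numbers of `l` with respect to `k` beads: `λ_i + k - i` for `i = 1, …, k`
(here 0-indexed: bead for row `i+1` sits at `parts i + (k - 1 - i)`). -/
def betaSet (l : AbacusPartition) (k : ℕ) : Finset ℕ :=
  (Finset.range k).image fun i => l.parts i + (k - 1 - i)

/-- Dominance order: `l ⊵ m`. -/
def Dominates (l m : AbacusPartition) : Prop :=
  ∀ j, ∑ i ∈ Finset.range j, m.parts i ≤ ∑ i ∈ Finset.range j, l.parts i

/-- Inserting an empty runner before runner `α` into an `e`-abacus: a bead at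
position `m*e + r` moves to `m*(e+1) + r` if `r < α` and to `m*(e+1) + r + 1` otherwise. -/
def insRunner (e α p : ℕ) : ℕ :=
  (p / e) * (e + 1) + p % e + (if p % e < α then 0 else 1)

/-- `lp` is the partition `λ⁺` obtained from `l` by inserting an empty runner at
position `α` into its `e`-abacus with `k` beads. -/
def IsPlus (e α k : ℕ) (l lp : AbacusPartition) : Prop :=
  lp.length ≤ k ∧ lp.betaSet k = (l.betaSet k).image (insRunner e α)

/-- A partition is `d`-regular if no `d` of its nonzero parts are equal. -/
def Regular (d : ℕ) (l : AbacusPartition) : Prop :=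
  ¬ ∃ i, l.parts i ≠ 0 ∧ l.parts (i + (d - 1)) = l.parts i

/-- The Young diagram of a partition, as a set of (row, column) cells, 0-indexed. -/
def cells (l : AbacusPartition) : Set (ℕ × ℕ) := {x | x.2 < l.parts x.1}

/-- `c 0, c 1, …, c (e-1)` are the successive cells of a ribbon: each next cell is
directly below, or directly to the left of, the previous cell. -/
def RibbonSteps (e : ℕ) (c : ℕ → ℕ × ℕ) : Prop :=
  ∀ i, i + 1 < e →
    (c (i + 1) = ((c i).1 + 1, (c i).2)) ∨
    ((c i).2 = (c (i + 1)).2 + 1 ∧ (c (i + 1)).1 = (c i).1)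

/-- `R` is an `e`-ribbon with cell enumeration `c` (head `c 0`). -/
def IsRibbonC (e : ℕ) (c : ℕ → ℕ × ℕ) (R : Set (ℕ × ℕ)) : Prop :=
  R = c '' (Set.Iio e) ∧ Set.InjOn c (Set.Iio e) ∧ RibbonSteps e c

/-- The spin of an `e`-ribbon: the number of vertical steps. -/
def spinOf (e : ℕ) (c : ℕ → ℕ × ℕ) : ℕ :=
  ((Finset.range (e - 1)).filter fun i => (c (i + 1)).1 = (c i).1 + 1).card

/-- The head of the ribbon lies in row 1 or directly below a cell of `l`. -/
def HeadOK (l : AbacusPartition) (c : ℕ → ℕ × ℕ) : Prop :=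
  (c 0).1 = 0 ∨ ((c 0).1 - 1, (c 0).2) ∈ cells l

/-- `l` is obtained from `n` by removing a single rim hook (ribbon) of length `e`. -/
def RemoveRibbon (e : ℕ) (n l : AbacusPartition) : Prop :=
  cells l ⊆ cells n ∧ ∃ c, IsRibbonC e c (cells n \ cells l)

/-- `κ` is the `e`-core of `l`: obtained by repeatedly removing `e`-rim-hooks,
and no further `e`-rim-hook can be removed. -/
def IsECoreOf (e : ℕ) (κ l : AbacusPartition) : Prop :=
  Relation.ReflTransGen (RemoveRibbon e) l κ ∧ ¬ ∃ m, RemoveRibbon e κ m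

/-- `l` has `e`-weight `w`: `|l| = |e-core of l| + w * e`. -/
def EWeight (e : ℕ) (l : AbacusPartition) (w : ℕ) : Prop :=
  ∃ κ, IsECoreOf e κ l ∧ l.size = κ.size + w * e

/-- `λ →_{m:e} ν` with total spin `s`: `[ν] \ [λ]` is a disjoint union of `m`
`e`-ribbons, each of whose heads lies in row 1 or directly below a cell of `λ`,
the sum of whose spins is `s`. -/
def HAddSpin (e m s : ℕ) (l n : AbacusPartition) : Prop :=
  cells l ⊆ cells n ∧
  ∃ (R : Fin m → Set (ℕ × ℕ)) (c : Fin m → ℕ → ℕ × ℕ),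
    ((cells n \ cells l) = ⋃ i, R i) ∧
    (Pairwise fun i j => Disjoint (R i) (R j)) ∧
    (∀ i, IsRibbonC e (c i) (R i) ∧ HeadOK l (c i)) ∧
    s = ∑ i, spinOf e (c i)

/-- `λ →_{m:e} ν`. -/
def HAdd (e m : ℕ) (l n : AbacusPartition) : Prop := ∃ s, HAddSpin e m s l n

/-- `x` is an addable node of `l`. -/
def Addable (l : AbacusPartition) (x : ℕ × ℕ) : Prop :=
  x ∉ cells l ∧ ∃ n : AbacusPartition, cells n = insert x (cells l)

/-- `x` is a removable node of `l`. -/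
def Removable (l : AbacusPartition) (x : ℕ × ℕ) : Prop :=
  x ∈ cells l ∧ ∃ n : AbacusPartition, cells n = cells l \ {x}

/-- The `e`-residue of a node `(c,d)`: `d - c mod e`. -/
def res (e : ℕ) (x : ℕ × ℕ) : ZMod e := (x.2 : ZMod e) - (x.1 : ZMod e)

/-- `N_i(λ,ν) = #{addable i-nodes of λ above x} - #{removable i-nodes of λ above x}`,
where `i = res e x` and `y` is above `x` iff `y.1 < x.1`. -/
noncomputable def Nnum (e : ℕ) (l : AbacusPartition) (x : ℕ × ℕ) : ℤ :=
  ({y | Addable l y ∧ res e y = res e x ∧ y.1 < x.1}.ncard : ℤ) -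
  ({y | Removable l y ∧ res e y = res e x ∧ y.1 < x.1}.ncard : ℤ)

end AbacusPartition

open AbacusPartition

lemma sum_range_add_eq_of_shift {M : Type*} [AddCommMonoid M] {g h : ℕ → M} {a b k : ℕ}
    (hab : a ≤ b) (hbk : b < k) (hout : ∀ i, i < a ∨ b < i → h i = g i)
    (hshift : ∀ i, a ≤ i → i < b → h (i + 1) = g i) :
    ∑ i ∈ range k, g i + h a = ∑ i ∈ range k, h i + g b := by
  obtain ⟨d, rfl⟩ := Nat.exists_eq_add_of_le hab
  obtain ⟨r, rfl⟩ := Nat.exists_eq_add_of_lt hbk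
  have hk : a + d + r + 1 = a + (d + 1) + r := by ring
  have hg : ∑ i ∈ range (a + (d + 1) + r), g i = ∑ i ∈ range a, g i +
      (∑ i ∈ range d, g (a + i) + g (a + d)) + ∑ i ∈ range r, g (a + (d + 1) + i) := by
    rw [sum_range_add, sum_range_add, sum_range_succ]
  have hh : ∑ i ∈ range (a + (d + 1) + r), h i = ∑ i ∈ range a, h i +
      (∑ i ∈ range d, h (a + (i + 1)) + h (a + 0)) + ∑ i ∈ range r, h (a + (d + 1) + i) := by
    rw [sum_range_add, sum_range_add, sum_range_succ']
  have h1 : ∑ i ∈ range a, h i = ∑ i ∈ range a, g i :=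
    sum_congr rfl fun i hi => hout i (.inl (mem_range.mp hi))
  have h2 : ∑ i ∈ range d, h (a + (i + 1)) = ∑ i ∈ range d, g (a + i) :=
    sum_congr rfl fun i hi => by
      rw [← add_assoc]; exact hshift (a + i) (by omega) (by simpa using hi)
  have h3 : ∑ i ∈ range r, h (a + (d + 1) + i) = ∑ i ∈ range r, g (a + (d + 1) + i) :=
    sum_congr rfl fun i _ => hout _ (.inr (by omega))
  rw [hk, hg, hh, add_zero, h1, h2, h3]
  abel

namespace AbacusPartition

lemma parts_eq_zero_of_length_le (l : AbacusPartition) {i : ℕ} (h : l.length ≤ i) :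
    l.parts i = 0 :=
  Nat.sInf_mem l.eventually_zero i h

lemma length_le_of_parts_le {l n : AbacusPartition} (h : ∀ i, l.parts i ≤ n.parts i) :
    l.length ≤ n.length :=
  Nat.sInf_le fun i hi => Nat.le_zero.mp ((h i).trans_eq (n.parts_eq_zero_of_length_le hi))

lemma parts_le_of_cells_subset {l n : AbacusPartition} (h : cells l ⊆ cells n) (i : ℕ) :
    l.parts i ≤ n.parts i := by
  by_contra! hlt
  have hmem : (i, n.parts i) ∈ cells l := hlt
  exact lt_irrefl (n.parts i) (h hmem : n.parts i < n.parts i)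

lemma sum_range_parts (l : AbacusPartition) {k : ℕ} (hk : l.length ≤ k) :
    ∑ i ∈ range k, l.parts i = l.size := by
  rw [size, ← sum_range_add_sum_Ico _ hk,
    sum_eq_zero fun i hi => l.parts_eq_zero_of_length_le (mem_Ico.mp hi).1, add_zero]

def betaNum (l : AbacusPartition) (k i : ℕ) : ℕ := l.parts i + (k - 1 - i)

lemma betaNum_strictAntiOn (l : AbacusPartition) (k : ℕ) :
    StrictAntiOn (l.betaNum k) (Set.Iio k) := by
  intro i hi j hj hij
  have := l.antitone hij.le
  simp only [Set.mem_Iio] at hi hj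
  simp only [betaNum]
  omega

lemma sum_betaSet {M : Type*} [AddCommMonoid M] (l : AbacusPartition) (k : ℕ) (f : ℕ → M) :
    ∑ p ∈ l.betaSet k, f p = ∑ i ∈ range k, f (l.betaNum k i) := by
  rw [betaSet, sum_image]
  · rfl
  · intro i hi j hj hij
    exact (l.betaNum_strictAntiOn k).injOn (by simpa using hi) (by simpa using hj) hij

lemma sum_betaNum (l : AbacusPartition) {k : ℕ} (hk : l.length ≤ k) :
    ∑ i ∈ range k, l.betaNum k i = l.size + ∑ i ∈ range k, (k - 1 - i) := by
  rw [← l.sum_range_parts hk, ← sum_add_distrib]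
  rfl

lemma insRunner_add_self {e : ℕ} (he : 0 < e) (α p : ℕ) :
    insRunner e α (p + e) = insRunner e α p + (e + 1) := by
  simp only [insRunner, Nat.add_div_right _ he, Nat.add_mod_right]
  ring

lemma insRunner_strictMono {e : ℕ} (he : 0 < e) (α : ℕ) : StrictMono (insRunner e α) := by
  refine strictMono_nat_of_lt_succ fun p => ?_
  have hr := Nat.mod_lt p he
  have hq : p / e ≤ (p + 1) / e := Nat.div_le_div_right (Nat.le_succ p)
  unfold insRunner
  rcases hq.lt_or_eq with hlt | heq
  · have : p / e * (e + 1) + (e + 1) ≤ (p + 1) / e * (e + 1) := by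
      rw [← Nat.succ_mul]; exact Nat.mul_le_mul_right _ hlt
    split_ifs <;> omega
  · have h1 := Nat.div_add_mod p e
    have h2 := Nat.div_add_mod (p + 1) e
    rw [← heq] at h2 ⊢
    split_ifs <;> omega

lemma IsPlus.size_add {e α k : ℕ} {l lp : AbacusPartition} (h : IsPlus e α k l lp) (he : 0 < e) :
    lp.size + ∑ i ∈ range k, (k - 1 - i) = ∑ i ∈ range k, insRunner e α (l.betaNum k i) :=
  calc lp.size + ∑ i ∈ range k, (k - 1 - i) = ∑ p ∈ lp.betaSet k, p := by
        rw [← lp.sum_betaNum h.1]; exact (lp.sum_betaSet k id).symm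
    _ = ∑ p ∈ l.betaSet k, insRunner e α p := by
        rw [h.2, sum_image (insRunner_strictMono he α).injective.injOn]
    _ = _ := l.sum_betaSet k _

section Ribbon

variable {e : ℕ} {c : ℕ → ℕ × ℕ}

lemma RibbonSteps.fst_le_and_snd_le (h : RibbonSteps e c) {i j : ℕ} (hij : i ≤ j) (hj : j < e) :
    (c i).1 ≤ (c j).1 ∧ (c j).2 ≤ (c i).2 := by
  induction j, hij using Nat.le_induction with
  | base => exact ⟨le_rfl, le_rfl⟩
  | succ j _ ih =>
    have := ih (by omega)
    rcases h j hj with hs | hs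
    · rw [hs]; dsimp; omega
    · omega

lemma RibbonSteps.fst_add_snd_add (h : RibbonSteps e c) {i j : ℕ} (hij : i ≤ j) (hj : j < e) :
    (c j).1 + (c i).2 + i = (c i).1 + (c j).2 + j := by
  induction j, hij using Nat.le_induction with
  | base => rfl
  | succ j _ ih =>
    have := ih (by omega)
    rcases h j hj with hs | hs
    · rw [hs]; dsimp; omega
    · omega

lemma RibbonSteps.exists_vertical_step (h : RibbonSteps e c) {m i : ℕ} (hm : m < e)
    (h0 : (c 0).1 ≤ i) (hi : i < (c m).1) :
    ∃ j, j < m ∧ (c j).1 = i ∧ c (j + 1) = (i + 1, (c j).2) := by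
  induction m with
  | zero => omega
  | succ m ih =>
    by_cases him : i < (c m).1
    · obtain ⟨j, hjm, hj⟩ := ih (by omega) him
      exact ⟨j, by omega, hj⟩
    · rcases h m hm with hs | hs
      · rw [hs] at hi
        have him' : (c m).1 = i := by dsimp at hi; omega
        exact ⟨m, m.lt_succ_self, him', by rw [hs, him']⟩
      · omega

end Ribbon

lemma mem_cells_sdiff_iff {n l : AbacusPartition} {x : ℕ × ℕ} :
    x ∈ cells n \ cells l ↔ l.parts x.1 ≤ x.2 ∧ x.2 < n.parts x.1 := by
  simp only [Set.mem_sdiff, cells, Set.mem_ofPred_eq, not_lt]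
  exact and_comm

namespace IsRibbonC

variable {e : ℕ} {c : ℕ → ℕ × ℕ} {n l : AbacusPartition} (hc : IsRibbonC e c (cells n \ cells l))
include hc

lemma mem {j : ℕ} (hj : j < e) : l.parts (c j).1 ≤ (c j).2 ∧ (c j).2 < n.parts (c j).1 :=
  mem_cells_sdiff_iff.mp (hc.1 ▸ ⟨j, hj, rfl⟩)

lemma exists_eq {x : ℕ × ℕ} (h1 : l.parts x.1 ≤ x.2) (h2 : x.2 < n.parts x.1) :
    ∃ j < e, c j = x := by
  have hx : x ∈ c '' Set.Iio e := hc.1 ▸ mem_cells_sdiff_iff.mpr ⟨h1, h2⟩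
  exact hx

lemma parts_eq_of_first {j : ℕ} (hj : j < e) (hfirst : ∀ t < j, (c t).1 < (c j).1) :
    n.parts (c j).1 = (c j).2 + 1 := by
  obtain ⟨hl, hn⟩ := hc.mem hj
  by_contra hne
  obtain ⟨t, ht, hct⟩ := hc.exists_eq (x := ((c j).1, (c j).2 + 1)) (by dsimp; omega)
    (by dsimp; omega)
  rcases lt_or_ge t j with htj | hjt
  · have := hfirst t htj
    rw [hct] at this
    exact lt_irrefl _ this
  · have := (hc.2.2.fst_le_and_snd_le hjt ht).2
    rw [hct] at this
    dsimp at this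
    omega

lemma parts_eq_of_last {j : ℕ} (hj : j < e) (hlast : ∀ t, j < t → t < e → (c j).1 < (c t).1) :
    l.parts (c j).1 = (c j).2 := by
  obtain ⟨hl, hn⟩ := hc.mem hj
  by_contra hne
  obtain ⟨t, ht, hct⟩ := hc.exists_eq (x := ((c j).1, (c j).2 - 1)) (by dsimp; omega)
    (by dsimp; omega)
  rcases lt_or_ge j t with hjt | htj
  · have := hlast t hjt ht
    rw [hct] at this
    exact lt_irrefl _ this
  · have := (hc.2.2.fst_le_and_snd_le htj hj).2
    rw [hct] at this
    dsimp at this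
    omega

lemma parts_eq_of_lt_or_lt (hsub : cells l ⊆ cells n) (he : 0 < e) {i : ℕ}
    (hi : i < (c 0).1 ∨ (c (e - 1)).1 < i) : n.parts i = l.parts i := by
  refine le_antisymm ?_ (parts_le_of_cells_subset hsub i)
  by_contra! hlt
  obtain ⟨j, hj, hcj⟩ := hc.exists_eq (x := (i, l.parts i)) le_rfl hlt
  have h0 := (hc.2.2.fst_le_and_snd_le (Nat.zero_le j) hj).1
  have h1 := (hc.2.2.fst_le_and_snd_le (show j ≤ e - 1 by omega) (by omega)).1
  rw [hcj] at h0 h1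
  omega

lemma parts_succ (he : 0 < e) {i : ℕ} (h0 : (c 0).1 ≤ i) (hi : i < (c (e - 1)).1) :
    n.parts (i + 1) = l.parts i + 1 := by
  obtain ⟨j, hj, hrow, hstep⟩ := hc.2.2.exists_vertical_step (by omega) h0 hi
  have hrow' : (c (j + 1)).1 = i + 1 := by rw [hstep]
  have hn := hc.parts_eq_of_first (j := j + 1) (by omega) fun t ht => by
    have := (hc.2.2.fst_le_and_snd_le (show t ≤ j by omega) (by omega)).1
    omega
  have hl := hc.parts_eq_of_last (j := j) (by omega) fun t ht hte => by
    have := (hc.2.2.fst_le_and_snd_le (show j + 1 ≤ t by omega) hte).1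
    omega
  rw [hstep] at hn
  rw [hrow] at hl
  dsimp at hn
  omega

end IsRibbonC

lemma RemoveRibbon.sum_betaNum {M : Type*} [AddCancelCommMonoid M] {e k : ℕ}
    {n l : AbacusPartition} (h : RemoveRibbon e n l) (he : 0 < e) (hk : n.length ≤ k)
    {f : ℕ → M} {d : M} (hf : ∀ p, f (p + e) = f p + d) :
    ∑ i ∈ range k, f (n.betaNum k i) = ∑ i ∈ range k, f (l.betaNum k i) + d := by
  obtain ⟨hsub, c, hc⟩ := h
  have hsteps := hc.2.2
  have hab := (hsteps.fst_le_and_snd_le (Nat.zero_le (e - 1)) (by omega)).1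
  have hcontent := hsteps.fst_add_snd_add (Nat.zero_le (e - 1)) (by omega)
  have hhead := hc.parts_eq_of_first he fun t ht => absurd ht t.not_lt_zero
  have htail := hc.parts_eq_of_last (j := e - 1) (by omega) fun t h1 h2 => by omega
  have hbk : (c (e - 1)).1 < k := by
    have := (hc.mem (j := e - 1) (by omega)).2
    by_contra! hkb
    rw [parts_eq_zero_of_length_le n (hk.trans hkb)] at this
    exact Nat.not_lt_zero _ this
  -- Rows `a < i ≤ b` of `n` are rows `i - 1` of `l` with one more box, so the beta-numbers of
  -- `n` are those of `l` with `β_b(l)` replaced by `β_a(n) = β_b(l) + e`.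
  have hexch : n.betaNum k (c 0).1 = l.betaNum k (c (e - 1)).1 + e := by
    simp only [betaNum]
    omega
  have hshift := sum_range_add_eq_of_shift (g := fun i => f (l.betaNum k i))
    (h := fun i => f (n.betaNum k i)) hab hbk
    (fun i hi => by simp only [betaNum, hc.parts_eq_of_lt_or_lt hsub he hi])
    (fun i h1 h2 => by
      simp only [betaNum, hc.parts_succ he h1 h2]
      congr 1
      omega)
  simp only [hexch, hf] at hshift
  refine add_right_cancel (b := f (l.betaNum k (c (e - 1)).1)) ?_
  rw [← hshift]
  abel

lemma exists_sum_betaNum_of_reflTransGen {M : Type*} [AddCancelCommMonoid M] {e k : ℕ}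
    (he : 0 < e) {l κ : AbacusPartition} (h : Relation.ReflTransGen (RemoveRibbon e) l κ)
    (hk : l.length ≤ k) :
    ∃ s : ℕ, ∀ (f : ℕ → M) (d : M), (∀ p, f (p + e) = f p + d) →
      ∑ i ∈ range k, f (l.betaNum k i) = ∑ i ∈ range k, f (κ.betaNum k i) + s • d := by
  induction h using Relation.ReflTransGen.head_induction_on with
  | refl => exact ⟨0, fun _ _ _ => by rw [zero_smul, add_zero]⟩
  | head hstep _ ih =>
    obtain ⟨s, hs⟩ := ih (le_trans (length_le_of_parts_le (parts_le_of_cells_subset hstep.1)) hk)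
    refine ⟨s + 1, fun f d hf => ?_⟩
    rw [hstep.sum_betaNum he hk hf, hs f d hf, succ_nsmul, add_assoc]

end AbacusPartition

theorem plus_same_size_general (e α k n : ℕ) (he : 2 ≤ e)
    (l m lp mp : AbacusPartition) (hl : l.length ≤ k) (hm : m.length ≤ k)
    (hln : l.size = n) (hmn : m.size = n)
    (hcore : ∃ κ, IsECoreOf e κ l ∧ IsECoreOf e κ m)
    (hlp : IsPlus e α k l lp) (hmp : IsPlus e α k m mp) :
    lp.size = mp.size := by
  obtain ⟨κ, hκl, hκm⟩ := hcore
  have he0 : 0 < e := by omega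
  obtain ⟨s, hs⟩ := exists_sum_betaNum_of_reflTransGen (M := ℕ) he0 hκl.1 hl
  obtain ⟨t, ht⟩ := exists_sum_betaNum_of_reflTransGen (M := ℕ) he0 hκm.1 hm
  have hst : s = t := by
    have hβl := hs id e fun _ => rfl
    have hβm := ht id e fun _ => rfl
    simp only [id, smul_eq_mul, l.sum_betaNum hl, m.sum_betaNum hm, hln, hmn] at hβl hβm
    exact Nat.eq_of_mul_eq_mul_right he0 (by omega)
  have hιl := hs _ _ (insRunner_add_self he0 α)
  have hιm := ht _ _ (insRunner_add_self he0 α)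
  have hlp' := hlp.size_add he0
  have hmp' := hmp.size_add he0
  subst hst
  omega

/-- if `λ` and `μ` are partitions of `n` with the same `e`-core
then `|λ⁺| = |μ⁺|`. -/
theorem plus_same_size (e α k n : ℕ) (he : 2 ≤ e) (hα : α ≤ e)
    (l m lp mp : AbacusPartition) (hl : l.length ≤ k) (hm : m.length ≤ k)
    (hln : l.size = n) (hmn : m.size = n)
    (hcore : ∃ κ, IsECoreOf e κ l ∧ IsECoreOf e κ m)
    (hlp : IsPlus e α k l lp) (hmp : IsPlus e α k m mp) :
    lp.size = mp.size :=
  plus_same_size_general e α k n he l m lp mp hl hm hln hmn hcore hlp hmp
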